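/- arXiv:1101.2914 — 5 statements merged into one kernel-verified Lean document; each statement's English description precedes it below -/
import Mathlib

section
/- Elementary path deformation: let (ω_p)_{p=0}^N be a path from ν to μ and let j ∈ {2,…,N} be an index with Ch(j) < Ch(j−1). Then the weight θ := ω_{j−2} + ε_{Ch(j)} is dominant integral, and the sequence obtained from (ω_p) by replacing ω_{j−1} with θ is again a path from ν to μ. -/
/-- A weight `λ ∈ ℤ^n` is dominant integral if `λ_1 ≥ λ_2 ≥ … ≥ λ_n ≥ 0`. -/
def DomInt {n : ℕ} (lam : Fin n → ℤ) : Prop :=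
  Antitone lam ∧ ∀ i, 0 ≤ lam i

/-- A path from `ν` to `μ`: a finite sequence `(λ_p)_{p=0}^N` of dominant
integral weights with `λ_0 = ν`, `λ_N = μ`, and `λ_p = λ_{p-1} + ε_{Ch(p)}`
for each `p ∈ {1,…,N}`, where `ε_i` is the `i`-th standard basis vector. -/
structure WPath (n : ℕ) (ν μ : Fin n → ℤ) where
  N : ℕ
  seq : ℕ → Fin n → ℤ
  ch : ℕ → Fin n
  first : seq 0 = ν
  last : seq N = μ
  dom : ∀ p, p ≤ N → DomInt (seq p)
  step : ∀ p, 1 ≤ p → p ≤ N → seq p = seq (p - 1) + Pi.single (ch p) 1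

section SingleSteps

variable {ι α : Type*} [LinearOrder ι] [AddCommMonoid α] [PartialOrder α]
  [IsOrderedAddMonoid α] {f : ι → α} {a b : ι} {c : α}

/-- Every index `i < b` is untouched by both increments, so
`f i ≥ (f + ε_a + ε_b) b ≥ f b + c`. -/
theorem Antitone.add_single_of_add_single_add_single (hf : Antitone f)
    (hg : Antitone (f + Pi.single a c + Pi.single b c)) (hba : b ≤ a) (hc : 0 ≤ c) :
    Antitone (f + Pi.single b c) := by
  intro i i' hii'
  have single_nonneg (k : ι) : 0 ≤ Pi.single (M := fun _ => α) k c := Pi.single_nonneg.2 hc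
  rcases eq_or_ne i' b with rfl | hi'b
  · rcases hii'.lt_or_eq with hlt | rfl
    · have hia : i ≠ a := (hlt.trans_le hba).ne
      have hgi := hg hii'
      simp only [Pi.add_apply, Pi.single_eq_same, Pi.single_eq_of_ne hia,
        Pi.single_eq_of_ne hlt.ne, add_zero] at hgi ⊢
      exact (le_add_of_nonneg_right (single_nonneg a i')).trans
        (by rwa [add_right_comm] at hgi)
    · exact le_rfl
  · simp only [Pi.add_apply, Pi.single_eq_of_ne hi'b, add_zero]
    exact (hf hii').trans (le_add_of_nonneg_right (single_nonneg b i))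

end SingleSteps

theorem DomInt.add_single_of_add_single_add_single {n : ℕ} {lam : Fin n → ℤ} {a b : Fin n}
    (hlam : DomInt lam) (h : DomInt (lam + Pi.single a 1 + Pi.single b 1)) (hba : b ≤ a) :
    DomInt (lam + Pi.single b 1) := by
  have hε : (0 : Fin n → ℤ) ≤ Pi.single b 1 := Pi.single_nonneg.2 zero_le_one
  exact ⟨hlam.1.add_single_of_add_single_add_single h.1 hba zero_le_one,
    fun i => add_nonneg (hlam.2 i) (hε i)⟩

namespace WPath

variable {n : ℕ} {ν μ : Fin n → ℤ} (P : WPath n ν μ) {k : ℕ}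

theorem seq_add_two (hk : k + 2 ≤ P.N) :
    P.seq (k + 2) = P.seq k + Pi.single (P.ch (k + 1)) 1 + Pi.single (P.ch (k + 2)) 1 := by
  rw [P.step (k + 2) (by omega) hk, show k + 2 - 1 = k + 1 from rfl,
    P.step (k + 1) (by omega) (by omega),
    Nat.add_sub_cancel]

theorem domInt_seq_add_single_ch_add_two (hk : k + 2 ≤ P.N)
    (hch : P.ch (k + 2) ≤ P.ch (k + 1)) :
    DomInt (P.seq k + Pi.single (P.ch (k + 2)) 1) :=
  (P.dom k (by omega)).add_single_of_add_single_add_single (P.seq_add_two hk ▸ P.dom _ hk) hch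

def swapSteps (k : ℕ) (hk : k + 2 ≤ P.N) (hch : P.ch (k + 2) ≤ P.ch (k + 1)) :
    WPath n ν μ where
  N := P.N
  seq := Function.update P.seq (k + 1) (P.seq k + Pi.single (P.ch (k + 2)) 1)
  ch := P.ch ∘ Equiv.swap (k + 1) (k + 2)
  first := by rw [Function.update_of_ne (by omega), P.first]
  last := by rw [Function.update_of_ne (by omega), P.last]
  dom p hp := by
    rcases eq_or_ne p (k + 1) with rfl | hpk
    · rw [Function.update_self]
      exact P.domInt_seq_add_single_ch_add_two hk hch
    · rw [Function.update_of_ne hpk]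
      exact P.dom p hp
  step p hp1 hpN := by
    rcases eq_or_ne p (k + 1) with rfl | hpk
    · simp
    rcases eq_or_ne p (k + 2) with rfl | hpk'
    · simp [P.seq_add_two hk, add_right_comm]
    · rw [Function.comp_apply, Equiv.swap_apply_of_ne_of_ne hpk hpk',
        Function.update_of_ne hpk, Function.update_of_ne (by omega), P.step p hp1 hpN]

end WPath

theorem path_deformation_general {n : ℕ} (ν μ : Fin n → ℤ)
    (P : WPath n ν μ) (j : ℕ) (hj2 : 2 ≤ j) (hjN : j ≤ P.N)
    (hch : P.ch j < P.ch (j - 1)) :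
    DomInt (P.seq (j - 2) + Pi.single (P.ch j) 1) ∧
      ∃ P' : WPath n ν μ, P'.N = P.N ∧
        ∀ p, p ≤ P.N →
          P'.seq p =
            Function.update P.seq (j - 1)
              (P.seq (j - 2) + Pi.single (P.ch j) 1) p := by
  obtain ⟨k, rfl⟩ : ∃ k, j = k + 2 := ⟨j - 2, by omega⟩
  rw [show k + 2 - 1 = k + 1 by omega] at hch ⊢
  rw [Nat.add_sub_cancel]
  exact ⟨P.domInt_seq_add_single_ch_add_two hjN hch.le,
    P.swapSteps k hjN hch.le, rfl, fun _ _ => rfl⟩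

/-- Elementary path deformation: if `(ω_p)_{p=0}^N` is a path from `ν` to `μ`
and `j ∈ {2,…,N}` satisfies `Ch(j) < Ch(j-1)`, then
`θ := ω_{j-2} + ε_{Ch(j)}` is dominant integral, and replacing `ω_{j-1}` by
`θ` yields again a path from `ν` to `μ`. -/
theorem path_deformation {n : ℕ} (hn : 1 ≤ n) (ν μ : Fin n → ℤ)
    (hν : DomInt ν) (hμ : DomInt μ) (hle : ∀ i, ν i ≤ μ i)
    (P : WPath n ν μ) (j : ℕ) (hj2 : 2 ≤ j) (hjN : j ≤ P.N)
    (hch : P.ch j < P.ch (j - 1)) :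
    DomInt (P.seq (j - 2) + Pi.single (P.ch j) 1) ∧
      ∃ P' : WPath n ν μ, P'.N = P.N ∧
        ∀ p, p ≤ P.N →
          P'.seq p =
            Function.update P.seq (j - 1)
              (P.seq (j - 2) + Pi.single (P.ch j) 1) p :=
  path_deformation_general ν μ P j hj2 hjN hch
end

section
/- Path independence of path operators up to sign: assume the turning relations hold, i.e. for every weight ι ∈ ℤ^n and all indices p ≠ q one has T_{ι+ε_p+ε_q, ι+ε_p} ∘ T_{ι+ε_p, ι} + T_{ι+ε_p+ε_q, ι+ε_q} ∘ T_{ι+ε_q, ι} = 0. Then for any two paths from ν to μ (ν ≼ μ dominant integral), the corresponding path operators V_ν → V_μ agree up to a sign: there exists s ∈ {+1, −1} such that the path operator of the first path equals s times the path operator of the second. -/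
/-- Manhattan distance `|μ,ν| = ∑ i |μ_i - ν_i|` between weights. -/
def mdist {n : ℕ} (μ ν : Fin n → ℤ) : ℤ :=
  ∑ i : Fin n, |μ i - ν i|

section PathOperators

variable {n : ℕ} {V : (Fin n → ℤ) → Type*}
  [∀ lam, AddCommGroup (V lam)] [∀ lam, Module ℂ (V lam)]

/-- Transport along an equality of weights. -/
def lcast {a b : Fin n → ℤ} (h : a = b) : V a →ₗ[ℂ] V b where
  toFun v := h ▸ v
  map_add' := by subst h; intros; rfl
  map_smul' := by subst h; intros; rfl

/-- The composition `T_{λ_N λ_{N-1}} ∘ ⋯ ∘ T_{λ_1 λ_0}` along the initial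
segment of length `N` of a sequence of weights. -/
def pathOpAux (T : ∀ μ lam : Fin n → ℤ, V lam →ₗ[ℂ] V μ)
    (seq : ℕ → Fin n → ℤ) : (N : ℕ) → (V (seq 0) →ₗ[ℂ] V (seq N))
  | 0 => LinearMap.id
  | (N + 1) => (T (seq (N + 1)) (seq N)).comp (pathOpAux T seq N)

/-- The composition `T_{λ_0 λ_1} ∘ ⋯ ∘ T_{λ_{N-1} λ_N}` along the reversed
initial segment of length `N` of a sequence of weights. -/
def revPathOpAux (T : ∀ μ lam : Fin n → ℤ, V lam →ₗ[ℂ] V μ)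
    (seq : ℕ → Fin n → ℤ) : (N : ℕ) → (V (seq N) →ₗ[ℂ] V (seq 0))
  | 0 => LinearMap.id
  | (N + 1) => (revPathOpAux T seq N).comp (T (seq N) (seq (N + 1)))

/-- The path operator `V_ν → V_μ` along a path from `ν` to `μ`. -/
def pathOp (T : ∀ μ lam : Fin n → ℤ, V lam →ₗ[ℂ] V μ) {ν μ : Fin n → ℤ}
    (P : WPath n ν μ) : V ν →ₗ[ℂ] V μ :=
  (lcast (V := V) P.last).comp
    ((pathOpAux T P.seq P.N).comp (lcast (V := V) P.first.symm))

/-- The path operator `V_μ → V_ν` along the reverse of a path from `ν` to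
`μ`. -/
def revPathOp (T : ∀ μ lam : Fin n → ℤ, V lam →ₗ[ℂ] V μ) {ν μ : Fin n → ℤ}
    (P : WPath n ν μ) : V μ →ₗ[ℂ] V ν :=
  (lcast (V := V) P.first).comp
    ((revPathOpAux T P.seq P.N).comp (lcast (V := V) P.last.symm))

end PathOperators

open DirectSum

theorem List.prod_map_eq_or_eq_neg_of_perm {R ι : Type*} [Ring R] {f : ι → R}
    (hf : ∀ a b, a ≠ b → f a * f b = -(f b * f a)) {l₁ l₂ : List ι} (h : l₁.Perm l₂) :
    (l₁.map f).prod = (l₂.map f).prod ∨ (l₁.map f).prod = -(l₂.map f).prod := by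
  induction h with
  | nil => exact Or.inl rfl
  | cons _ _ ih => rcases ih with ih | ih <;> simp [ih]
  | swap a b _ =>
    by_cases hab : a = b
    · exact Or.inl (by rw [hab])
    · right
      simp only [List.map_cons, List.prod_cons, ← mul_assoc, hf b a (Ne.symm hab), neg_mul]
  | trans _ _ ih₁ ih₂ =>
    rcases ih₁ with ih₁ | ih₁ <;> rcases ih₂ with ih₂ | ih₂ <;> simp [ih₁, ih₂]

/-- Latest step first, matching the order of composition in `pathOpAux`. -/
def stepWord {n : ℕ} (ch : ℕ → Fin n) : ℕ → List (Fin n)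
  | 0 => []
  | M + 1 => ch (M + 1) :: stepWord ch M

theorem seq_eq_add_count_stepWord {n : ℕ} {seq : ℕ → Fin n → ℤ} {ch : ℕ → Fin n} {M : ℕ}
    (hstep : ∀ p, 1 ≤ p → p ≤ M → seq p = seq (p - 1) + Pi.single (ch p) 1) :
    seq M = seq 0 + fun i => ((stepWord ch M).count i : ℤ) := by
  induction M with
  | zero => ext i; simp [stepWord]
  | succ M ih =>
    rw [hstep (M + 1) le_add_self le_rfl, Nat.add_sub_cancel,
      ih fun p h₁ h₂ => hstep p h₁ (by omega)]
    ext i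
    by_cases hi : i = ch (M + 1)
    · subst hi; simp [stepWord, add_assoc]
    · simp [stepWord, List.count_cons, hi, Ne.symm hi]

namespace WPath

variable {n : ℕ} {ν μ : Fin n → ℤ}

def word (P : WPath n ν μ) : List (Fin n) :=
  stepWord P.ch P.N

theorem word_perm (P₁ P₂ : WPath n ν μ) : P₁.word.Perm P₂.word := by
  classical
  unfold word
  refine List.perm_iff_count.mpr fun i => ?_
  have h₁ := seq_eq_add_count_stepWord P₁.step
  have h₂ := seq_eq_add_count_stepWord P₂.step
  rw [P₁.first, P₁.last] at h₁
  rw [P₂.first, P₂.last] at h₂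
  exact Int.natCast_inj.mp (congrFun (add_left_cancel (h₁.symm.trans h₂)) i)

end WPath

section StepOperators

variable {n : ℕ} {V : (Fin n → ℤ) → Type*} [∀ lam, AddCommGroup (V lam)]
  [∀ lam, Module ℂ (V lam)]

def SatisfiesTurning (T : ∀ μ lam : Fin n → ℤ, V lam →ₗ[ℂ] V μ) : Prop :=
  ∀ (ι : Fin n → ℤ) (p q : Fin n), p ≠ q →
    (T (ι + Pi.single p 1 + Pi.single q 1) (ι + Pi.single p 1)).comp (T (ι + Pi.single p 1) ι) +
      (T (ι + Pi.single p 1 + Pi.single q 1) (ι + Pi.single q 1)).comp (T (ι + Pi.single q 1) ι)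
      = 0

noncomputable def stepOp (T : ∀ μ lam : Fin n → ℤ, V lam →ₗ[ℂ] V μ) (i : Fin n) :
    Module.End ℂ (⨁ lam, V lam) :=
  toModule ℂ _ _ fun lam => (lof ℂ _ V (lam + Pi.single i 1)).comp (T (lam + Pi.single i 1) lam)

theorem stepOp_comp_lof (T : ∀ μ lam : Fin n → ℤ, V lam →ₗ[ℂ] V μ) (i : Fin n)
    (lam : Fin n → ℤ) :
    (stepOp T i).comp (lof ℂ _ V lam) =
      (lof ℂ _ V (lam + Pi.single i 1)).comp (T (lam + Pi.single i 1) lam) := by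
  ext x
  simp [stepOp, toModule_lof]

theorem stepOp_mul_stepOp_of_ne {T : ∀ μ lam : Fin n → ℤ, V lam →ₗ[ℂ] V μ}
    (hturn : SatisfiesTurning T) {p q : Fin n} (hpq : p ≠ q) :
    stepOp T p * stepOp T q = -(stepOp T q * stepOp T p) := by
  refine linearMap_ext ℂ fun lam => ?_
  have hturn' := eq_neg_of_add_eq_zero_left (hturn lam q p hpq.symm)
  rw [add_right_comm] at hturn'
  simp only [Module.End.mul_eq_comp, LinearMap.neg_comp, LinearMap.comp_assoc, stepOp_comp_lof]
  simp only [← LinearMap.comp_assoc, stepOp_comp_lof]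
  rw [LinearMap.comp_assoc, LinearMap.comp_assoc, add_right_comm, hturn', LinearMap.comp_neg]

theorem lof_comp_lcast {a b : Fin n → ℤ} (h : a = b) :
    (lof ℂ _ V b).comp (lcast (V := V) h) = lof ℂ _ V a := by
  subst h; rfl

theorem lof_comp_pathOpAux (T : ∀ μ lam : Fin n → ℤ, V lam →ₗ[ℂ] V μ) {seq : ℕ → Fin n → ℤ}
    {ch : ℕ → Fin n} {M : ℕ}
    (hstep : ∀ p, 1 ≤ p → p ≤ M → seq p = seq (p - 1) + Pi.single (ch p) 1) :
    (lof ℂ _ V (seq M)).comp (pathOpAux T seq M) =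
      ((stepWord ch M).map (stepOp T)).prod.comp (lof ℂ _ V (seq 0)) := by
  induction M with
  | zero => rfl
  | succ M ih =>
    have hs : seq (M + 1) = seq M + Pi.single (ch (M + 1)) 1 := hstep (M + 1) le_add_self le_rfl
    rw [stepWord, List.map_cons, List.prod_cons, Module.End.mul_eq_comp, LinearMap.comp_assoc,
      ← ih fun p h₁ h₂ => hstep p h₁ (by omega), ← LinearMap.comp_assoc, stepOp_comp_lof, ← hs,
      pathOpAux, LinearMap.comp_assoc]

theorem lof_comp_pathOp (T : ∀ μ lam : Fin n → ℤ, V lam →ₗ[ℂ] V μ) {ν μ : Fin n → ℤ}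
    (P : WPath n ν μ) :
    (lof ℂ _ V μ).comp (pathOp T P) = (P.word.map (stepOp T)).prod.comp (lof ℂ _ V ν) := by
  rw [pathOp, ← LinearMap.comp_assoc, lof_comp_lcast, ← LinearMap.comp_assoc,
    lof_comp_pathOpAux T P.step, LinearMap.comp_assoc, lof_comp_lcast, WPath.word]

end StepOperators

theorem pathOp_independent_up_to_sign_general {n : ℕ}
    {V : (Fin n → ℤ) → Type*} [∀ lam, AddCommGroup (V lam)]
    [∀ lam, Module ℂ (V lam)]
    (T : ∀ μ lam : Fin n → ℤ, V lam →ₗ[ℂ] V μ)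
    (hturn : ∀ (ι : Fin n → ℤ) (p q : Fin n), p ≠ q →
      (T (ι + Pi.single p 1 + Pi.single q 1) (ι + Pi.single p 1)).comp
          (T (ι + Pi.single p 1) ι) +
        (T (ι + Pi.single p 1 + Pi.single q 1) (ι + Pi.single q 1)).comp
          (T (ι + Pi.single q 1) ι) = 0)
    (ν μ : Fin n → ℤ)
    (P₁ P₂ : WPath n ν μ) :
    ∃ s : ℂ, (s = 1 ∨ s = -1) ∧ pathOp T P₁ = s • pathOp T P₂ := by
  have hcancel : ∀ s : ℂ, pathOp T P₁ = s • pathOp T P₂ ↔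
      (P₁.word.map (stepOp T)).prod.comp (lof ℂ _ V ν) =
        s • (P₂.word.map (stepOp T)).prod.comp (lof ℂ _ V ν) := fun s => by
    rw [← lof_comp_pathOp, ← lof_comp_pathOp, ← LinearMap.comp_smul,
      LinearMap.cancel_left (of_injective μ)]
  rcases List.prod_map_eq_or_eq_neg_of_perm (fun _ _ => stepOp_mul_stepOp_of_ne hturn)
    (P₁.word_perm P₂) with h | h
  · exact ⟨1, Or.inl rfl, (hcancel 1).mpr (by rw [h, one_smul])⟩
  · exact ⟨-1, Or.inr rfl, (hcancel (-1)).mpr (by rw [h]; ext x; simp)⟩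

/-- Path independence of path operators up to sign: if the turning relations
`T_{ι+ε_p+ε_q, ι+ε_p} ∘ T_{ι+ε_p, ι} + T_{ι+ε_p+ε_q, ι+ε_q} ∘ T_{ι+ε_q, ι} = 0`
hold for all `ι` and `p ≠ q`, then any two paths from `ν` to `μ` have path
operators agreeing up to a sign. -/
theorem pathOp_independent_up_to_sign {n : ℕ} (hn : 1 ≤ n)
    {V : (Fin n → ℤ) → Type*} [∀ lam, AddCommGroup (V lam)]
    [∀ lam, Module ℂ (V lam)]
    (T : ∀ μ lam : Fin n → ℤ, V lam →ₗ[ℂ] V μ)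
    (hT0 : ∀ μ lam : Fin n → ℤ, ¬(DomInt μ ∧ DomInt lam) → T μ lam = 0)
    (hturn : ∀ (ι : Fin n → ℤ) (p q : Fin n), p ≠ q →
      (T (ι + Pi.single p 1 + Pi.single q 1) (ι + Pi.single p 1)).comp
          (T (ι + Pi.single p 1) ι) +
        (T (ι + Pi.single p 1 + Pi.single q 1) (ι + Pi.single q 1)).comp
          (T (ι + Pi.single q 1) ι) = 0)
    (ν μ : Fin n → ℤ) (hν : DomInt ν) (hμ : DomInt μ) (hle : ∀ i, ν i ≤ μ i)
    (P₁ P₂ : WPath n ν μ) :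
    ∃ s : ℂ, (s = 1 ∨ s = -1) ∧ pathOp T P₁ = s • pathOp T P₂ :=
  pathOp_independent_up_to_sign_general T hturn ν μ P₁ P₂
end

section
/- If λ and μ are dominant integral weights with λ ≼ μ and λ ∉ B(μ), then there exists an index i ∈ {1,…,n−1} such that λ_i < μ_{i+1} and μ_{i+1} > μ_{i+2} (with the convention μ_{n+1} := 0). -/
/-- The "shifted" weight `(μ_2, μ_3, …, μ_n, 0)`: at position `i` it takes
the value `μ_{i+1}`, with the convention `μ_{n+1} := 0`. -/
def boxNext {n : ℕ} (μ : Fin n → ℤ) (i : Fin n) : ℤ :=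
  if h : (i : ℕ) + 1 < n then μ ⟨(i : ℕ) + 1, h⟩ else 0

/-- The box `B(μ)`: the set of dominant integral weights `λ` with
`μ_i ≥ λ_i ≥ μ_{i+1}` for `1 ≤ i ≤ n-1` and `μ_n ≥ λ_n ≥ 0`. -/
def InBox {n : ℕ} (μ lam : Fin n → ℤ) : Prop :=
  DomInt lam ∧ ∀ i : Fin n, boxNext μ i ≤ lam i ∧ lam i ≤ μ i

section

variable {n : ℕ}

lemma boxNext_of_add_one_lt (μ : Fin n → ℤ) {i : Fin n} (h : (i : ℕ) + 1 < n) :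
    boxNext μ i = μ ⟨i + 1, h⟩ :=
  dif_pos h

lemma boxNext_of_not_add_one_lt (μ : Fin n → ℤ) {i : Fin n} (h : ¬(i : ℕ) + 1 < n) :
    boxNext μ i = 0 :=
  dif_neg h

lemma add_one_lt_of_lt_boxNext {lam μ : Fin n → ℤ} (hpos : ∀ i, 0 ≤ lam i) {i : Fin n}
    (h : lam i < boxNext μ i) : (i : ℕ) + 1 < n := by
  by_contra hlast
  rw [boxNext_of_not_add_one_lt μ hlast] at h
  exact (hpos i).not_gt h

lemma DomInt.exists_lt_boxNext_of_not_inBox {lam μ : Fin n → ℤ} (hlam : DomInt lam)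
    (hle : ∀ i, lam i ≤ μ i) (hnot : ¬InBox μ lam) : ∃ i, lam i < boxNext μ i := by
  by_contra! h
  exact hnot ⟨hlam, fun i => ⟨h i, hle i⟩⟩

lemma boxNext_succ_lt_of_maximal {lam μ : Fin n → ℤ} (hlam : Antitone lam) {i : Fin n}
    (hi : lam i < boxNext μ i) (hmax : ∀ j, lam j < boxNext μ j → j ≤ i)
    (h : (i : ℕ) + 1 < n) : boxNext μ ⟨i + 1, h⟩ < μ ⟨i + 1, h⟩ := by
  have hnext : boxNext μ ⟨i + 1, h⟩ ≤ lam ⟨i + 1, h⟩ :=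
    not_lt.1 fun hlt => (hmax _ hlt).not_gt (Fin.lt_def.2 (Nat.lt_succ_self _))
  calc boxNext μ ⟨i + 1, h⟩ ≤ lam ⟨i + 1, h⟩ := hnext
    _ ≤ lam i := hlam (Fin.le_def.2 (Nat.le_succ _))
    _ < μ ⟨i + 1, h⟩ := by rwa [boxNext_of_add_one_lt μ h] at hi

end

theorem exists_index_of_not_inBox_general {n : ℕ} (lam μ : Fin n → ℤ)
    (hlam : DomInt lam) (hle : ∀ i, lam i ≤ μ i)
    (hnot : ¬ InBox μ lam) :
    ∃ (i : ℕ) (hi : i + 1 < n),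
      lam ⟨i, Nat.lt_of_succ_lt hi⟩ < μ ⟨i + 1, hi⟩ ∧
        (if h : i + 2 < n then μ ⟨i + 2, h⟩ else 0) < μ ⟨i + 1, hi⟩ := by
  obtain ⟨i₀, hi₀⟩ := hlam.exists_lt_boxNext_of_not_inBox hle hnot
  have hne : (Finset.univ.filter fun j => lam j < boxNext μ j).Nonempty := ⟨i₀, by simpa⟩
  set i := (Finset.univ.filter fun j => lam j < boxNext μ j).max' hne
  have hi : lam i < boxNext μ i := by simpa using Finset.max'_mem _ hne
  have hmax : ∀ j, lam j < boxNext μ j → j ≤ i := fun j hj => Finset.le_max' _ j (by simpa)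
  have hi1 := add_one_lt_of_lt_boxNext hlam.2 hi
  exact ⟨i, hi1, by rwa [boxNext_of_add_one_lt μ hi1] at hi,
    boxNext_succ_lt_of_maximal hlam.1 hi hmax hi1⟩

/-- If `λ ≼ μ` are dominant integral and `λ ∉ B(μ)`, then there is an index
`i ∈ {1,…,n-1}` (here `0`-indexed: `i` with `i+1 < n`) such that
`λ_i < μ_{i+1}` and `μ_{i+1} > μ_{i+2}` (convention `μ_{n+1} := 0`). -/
theorem exists_index_of_not_inBox {n : ℕ} (hn : 1 ≤ n) (lam μ : Fin n → ℤ)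
    (hlam : DomInt lam) (hμ : DomInt μ) (hle : ∀ i, lam i ≤ μ i)
    (hnot : ¬ InBox μ lam) :
    ∃ (i : ℕ) (hi : i + 1 < n),
      lam ⟨i, Nat.lt_of_succ_lt hi⟩ < μ ⟨i + 1, hi⟩ ∧
        (if h : i + 2 < n then μ ⟨i + 2, h⟩ else 0) < μ ⟨i + 1, hi⟩ :=
  exists_index_of_not_inBox_general lam μ hlam hle hnot
end

section
/- Let μ be a dominant integral weight, i ∈ {1,…,n−1} an index with μ_{i+1} > μ_{i+2} (convention μ_{n+1} := 0), and λ a dominant integral weight with λ ≼ μ and λ_i < μ_{i+1}. Define λ₋ = (μ_1,…,μ_{i−1}, μ_{i+1}−1, μ_{i+1}−1, μ_{i+2},…,μ_n), λ₀ = (μ_1,…,μ_{i−1}, μ_{i+1}, μ_{i+1}−1, μ_{i+2},…,μ_n), λ₊ = (μ_1,…,μ_{i−1}, μ_{i+1}, μ_{i+1}, μ_{i+2},…,μ_n). Then λ₋, λ₀, λ₊ are all dominant integral, λ ≼ λ₋, λ₊ ≼ μ, λ₀ = λ₋ + ε_i, λ₊ = λ₀ + ε_{i+1}, and moreover λ₀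 ∈ B(μ) and λ₊ ∈ B(μ). -/
/-- The weight `λ₋ = (μ_1,…,μ_{i-1}, μ_{i+1}-1, μ_{i+1}-1, μ_{i+2},…,μ_n)`
(positions `i` and `i+1`, here `0`-indexed, carry the value `μ_{i+1}-1`). -/
def lamMinus {n : ℕ} (μ : Fin n → ℤ) (i : ℕ) (hi : i + 1 < n) : Fin n → ℤ :=
  fun j => if (j : ℕ) = i ∨ (j : ℕ) = i + 1 then μ ⟨i + 1, hi⟩ - 1 else μ j

/-- The weight `λ₀ = (μ_1,…,μ_{i-1}, μ_{i+1}, μ_{i+1}-1, μ_{i+2},…,μ_n)`. -/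
def lamZero {n : ℕ} (μ : Fin n → ℤ) (i : ℕ) (hi : i + 1 < n) : Fin n → ℤ :=
  fun j => if (j : ℕ) = i then μ ⟨i + 1, hi⟩
    else if (j : ℕ) = i + 1 then μ ⟨i + 1, hi⟩ - 1 else μ j

/-- The weight `λ₊ = (μ_1,…,μ_{i-1}, μ_{i+1}, μ_{i+1}, μ_{i+2},…,μ_n)`. -/
def lamPlus {n : ℕ} (μ : Fin n → ℤ) (i : ℕ) (hi : i + 1 < n) : Fin n → ℤ :=
  fun j => if (j : ℕ) = i ∨ (j : ℕ) = i + 1 then μ ⟨i + 1, hi⟩ else μ j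

/-
The three weights are built from one another by lowering a single coordinate: `λ₊` interlaces
with `μ` (`μ_{j+1} ≤ λ₊_j ≤ μ_j`), `λ₀ = λ₊ - ε_{i+1}` and `λ₋ = λ₀ - ε_i`. Interlacing with a
dominant weight already forces dominance, since `ν_{j+1} ≤ μ_{j+1} ≤ ν_j`; and lowering a
coordinate that stays at least its lower bound `μ_{j+1}` preserves interlacing. The hypothesis
`μ_{i+2} < μ_{i+1}` makes the first lowering legal, so `λ₀ ∈ B(μ)`; the second lowers `λ₀`
within its own box `B(λ₀)`, which is why `λ₋` is dominant without lying in `B(μ)`.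
-/

section Interlacing

variable {n : ℕ} {μ ν : Fin n → ℤ}

lemma boxNext_nonneg (hμ : ∀ j, 0 ≤ μ j) (j : Fin n) : 0 ≤ boxNext μ j := by
  unfold boxNext
  split_ifs
  exacts [hμ _, le_rfl]

lemma Antitone.le_boxNext_of_lt (hμ : Antitone μ) {a b : Fin n} (hab : a < b) :
    μ b ≤ boxNext μ a := by
  have ha : (a : ℕ) + 1 < n := by omega
  rw [boxNext, dif_pos ha]
  exact hμ (Fin.le_def.2 (Nat.succ_le_of_lt hab))

namespace DomInt

lemma boxNext_le_of_le (hμ : DomInt μ) {a b : Fin n} (hab : (a : ℕ) ≤ b + 1) :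
    boxNext μ b ≤ μ a := by
  unfold boxNext
  split_ifs with hb
  · exact hμ.1 (Fin.le_def.2 hab)
  · exact hμ.2 a

lemma boxNext_le (hμ : DomInt μ) (j : Fin n) : boxNext μ j ≤ μ j :=
  hμ.boxNext_le_of_le (Nat.le_succ j)

theorem inBox_of_interlacing (hμ : DomInt μ)
    (h : ∀ j, boxNext μ j ≤ ν j ∧ ν j ≤ μ j) : InBox μ ν := by
  refine ⟨⟨fun a b hab => ?_, fun j => (boxNext_nonneg hμ.2 j).trans (h j).1⟩, h⟩
  rcases hab.eq_or_lt with rfl | hlt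
  · exact le_rfl
  · calc ν b ≤ μ b := (h b).2
      _ ≤ boxNext μ a := hμ.1.le_boxNext_of_lt hlt
      _ ≤ ν a := (h a).1

theorem inBox_sub_single (hμ : DomInt μ) (h : ∀ j, boxNext μ j ≤ ν j ∧ ν j ≤ μ j)
    {k : Fin n} (hk : boxNext μ k < ν k) : InBox μ (ν - Pi.single k 1) := by
  refine hμ.inBox_of_interlacing fun j => ?_
  rcases eq_or_ne j k with rfl | hjk
  · simp only [Pi.sub_apply, Pi.single_eq_same]
    constructor <;> linarith [(h j).2]
  · simpa [Pi.single_eq_of_ne hjk] using h j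

theorem sub_single (hν : DomInt ν) {k : Fin n} (hk : boxNext ν k < ν k) :
    DomInt (ν - Pi.single k 1) :=
  (hν.inBox_sub_single (fun j => ⟨hν.boxNext_le j, le_rfl⟩) hk).1

end DomInt

end Interlacing

section Weights

variable {n : ℕ} (μ : Fin n → ℤ) (i : ℕ) (hi : i + 1 < n)

lemma lamZero_eq_lamMinus_add_single :
    lamZero μ i hi = lamMinus μ i hi + Pi.single ⟨i, Nat.lt_of_succ_lt hi⟩ 1 := by
  funext j
  simp only [lamZero, lamMinus, Pi.add_apply, Pi.single_apply, Fin.ext_iff]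
  split_ifs <;> omega

lemma lamPlus_eq_lamZero_add_single :
    lamPlus μ i hi = lamZero μ i hi + Pi.single ⟨i + 1, hi⟩ 1 := by
  funext j
  simp only [lamPlus, lamZero, Pi.add_apply, Pi.single_apply, Fin.ext_iff]
  split_ifs <;> omega

lemma boxNext_lamZero_lt :
    boxNext (lamZero μ i hi) ⟨i, Nat.lt_of_succ_lt hi⟩ <
      lamZero μ i hi ⟨i, Nat.lt_of_succ_lt hi⟩ := by
  simp [boxNext, hi, lamZero]

variable {μ}

lemma lamPlus_interlacing (hμ : DomInt μ) (j : Fin n) :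
    boxNext μ j ≤ lamPlus μ i hi j ∧ lamPlus μ i hi j ≤ μ j := by
  simp only [lamPlus]
  split_ifs with hj
  · exact ⟨hμ.boxNext_le_of_le (by dsimp only; omega),
      hμ.1 (Fin.le_def.2 (by dsimp only; omega))⟩
  · exact ⟨hμ.boxNext_le j, le_rfl⟩

theorem lamPlus_mem_box (hμ : DomInt μ) : InBox μ (lamPlus μ i hi) :=
  hμ.inBox_of_interlacing (lamPlus_interlacing i hi hμ)

theorem lamZero_mem_box (hμ : DomInt μ)
    (hstrict : boxNext μ ⟨i + 1, hi⟩ < μ ⟨i + 1, hi⟩) :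
    InBox μ (lamZero μ i hi) := by
  rw [eq_sub_of_add_eq (lamPlus_eq_lamZero_add_single μ i hi).symm]
  exact hμ.inBox_sub_single (lamPlus_interlacing i hi hμ) (by simpa [lamPlus] using hstrict)

theorem domInt_lamMinus (hμ : DomInt μ)
    (hstrict : boxNext μ ⟨i + 1, hi⟩ < μ ⟨i + 1, hi⟩) :
    DomInt (lamMinus μ i hi) := by
  rw [eq_sub_of_add_eq (lamZero_eq_lamMinus_add_single μ i hi).symm]
  exact (lamZero_mem_box i hi hμ hstrict).1.sub_single (boxNext_lamZero_lt μ i hi)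

lemma le_lamMinus {lam : Fin n → ℤ} (hlam : DomInt lam) (hle : ∀ j, lam j ≤ μ j)
    (hlt : lam ⟨i, Nat.lt_of_succ_lt hi⟩ < μ ⟨i + 1, hi⟩) (j : Fin n) :
    lam j ≤ lamMinus μ i hi j := by
  simp only [lamMinus]
  split_ifs with hj
  · have : lam j ≤ lam ⟨i, Nat.lt_of_succ_lt hi⟩ :=
      hlam.1 (Fin.le_def.2 (by dsimp only; omega))
    omega
  · exact hle j

end Weights

theorem lamMinus_lamZero_lamPlus_props_general {n : ℕ}
    (μ : Fin n → ℤ) (hμ : DomInt μ) (i : ℕ) (hi : i + 1 < n)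
    (hstrict : (if h : i + 2 < n then μ ⟨i + 2, h⟩ else 0) < μ ⟨i + 1, hi⟩)
    (lam : Fin n → ℤ) (hlam : DomInt lam) (hle : ∀ j, lam j ≤ μ j)
    (hlt : lam ⟨i, Nat.lt_of_succ_lt hi⟩ < μ ⟨i + 1, hi⟩) :
    DomInt (lamMinus μ i hi) ∧ DomInt (lamZero μ i hi) ∧
      DomInt (lamPlus μ i hi) ∧
      (∀ j, lam j ≤ lamMinus μ i hi j) ∧ (∀ j, lamPlus μ i hi j ≤ μ j) ∧
      lamZero μ i hi =
        lamMinus μ i hi + Pi.single ⟨i, Nat.lt_of_succ_lt hi⟩ 1 ∧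
      lamPlus μ i hi = lamZero μ i hi + Pi.single ⟨i + 1, hi⟩ 1 ∧
      InBox μ (lamZero μ i hi) ∧ InBox μ (lamPlus μ i hi) := by
  have hZ := lamZero_mem_box i hi hμ hstrict
  have hP := lamPlus_mem_box i hi hμ
  exact ⟨domInt_lamMinus i hi hμ hstrict, hZ.1, hP.1, le_lamMinus i hi hlam hle hlt,
    fun j => (hP.2 j).2, lamZero_eq_lamMinus_add_single μ i hi,
    lamPlus_eq_lamZero_add_single μ i hi, hZ, hP⟩

/-- Properties of the weights `λ₋, λ₀, λ₊`: all are dominant integral,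
`λ ≼ λ₋`, `λ₊ ≼ μ`, `λ₀ = λ₋ + ε_i`, `λ₊ = λ₀ + ε_{i+1}`, and
`λ₀, λ₊ ∈ B(μ)`. -/
theorem lamMinus_lamZero_lamPlus_props {n : ℕ} (hn : 2 ≤ n)
    (μ : Fin n → ℤ) (hμ : DomInt μ) (i : ℕ) (hi : i + 1 < n)
    (hstrict : (if h : i + 2 < n then μ ⟨i + 2, h⟩ else 0) < μ ⟨i + 1, hi⟩)
    (lam : Fin n → ℤ) (hlam : DomInt lam) (hle : ∀ j, lam j ≤ μ j)
    (hlt : lam ⟨i, Nat.lt_of_succ_lt hi⟩ < μ ⟨i + 1, hi⟩) :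
    DomInt (lamMinus μ i hi) ∧ DomInt (lamZero μ i hi) ∧
      DomInt (lamPlus μ i hi) ∧
      (∀ j, lam j ≤ lamMinus μ i hi j) ∧ (∀ j, lamPlus μ i hi j ≤ μ j) ∧
      lamZero μ i hi =
        lamMinus μ i hi + Pi.single ⟨i, Nat.lt_of_succ_lt hi⟩ 1 ∧
      lamPlus μ i hi = lamZero μ i hi + Pi.single ⟨i + 1, hi⟩ 1 ∧
      InBox μ (lamZero μ i hi) ∧ InBox μ (lamPlus μ i hi) :=
  lamMinus_lamZero_lamPlus_props_general μ hμ i hi hstrict lam hlam hle hlt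
end

section
/- Factorization of powers of the Laplace operator (abstract form): assume (a) for every dominant integral λ there are nonzero constants a_λ and constants b_{λ,p} (p = 1,…,n) such that Δ_λ = a_λ R_λ² + Σ_{p=1}^n b_{λ,p} T_{λ, λ−ε_p} ∘ T_{λ−ε_p, λ}; (b) T_{μλ} ∘ R_λ + R_μ ∘ T_{μλ} = 0 whenever |μ,λ| = 1; (c) Δ_μ ∘ T_{μλ} = T_{μλ} ∘ Δ_λ whenever |μ,λ| = 1, and Δ_λ ∘ R_λ = R_λ ∘ Δ_λ for all λ; (d) for every dominant integral λ ≺ μ with λ ∉ B(μ), the path operators P_{μλ} : V_λ → V_μ and P_{λμ} : V_μ → V_λ vanish; (e) path operators between fixed weights are independent of the chosen path. Then for every dominant integral weight μ and every integer n₀ > μ_1 there exist constants c(μ,λ) ∈ ℂ such that Δ_μ^{n₀} = R_μ ∘ [ Σ_{λ ∈ B(μ)} c(μ,λ) · P_{μλ} ∘ Δ_λ^{ n₀ − |μ,λ| − 1} ∘ P_{λμ} ] ∘ R_μ as linear operators on V_μ. -/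
open Classical in
/-- The box `B(μ)` as a finite set of weights. -/
noncomputable def boxFinset {n : ℕ} (μ : Fin n → ℤ) : Finset (Fin n → ℤ) :=
  (Finset.Icc (boxNext μ) μ).filter (fun lam => InBox μ lam)

open Submodule

section Sandwich

variable {R M₀ M₁ M₂ M₃ : Type*} [CommSemiring R] [AddCommMonoid M₀] [AddCommMonoid M₁]
  [AddCommMonoid M₂] [AddCommMonoid M₃] [Module R M₀] [Module R M₁] [Module R M₂] [Module R M₃]

def sandwich (A : M₂ →ₗ[R] M₃) (B : M₀ →ₗ[R] M₁) : (M₁ →ₗ[R] M₂) →ₗ[R] M₀ →ₗ[R] M₃ where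
  toFun g := A.comp (g.comp B)
  map_add' _ _ := by ext; simp
  map_smul' _ _ := by ext; simp

@[simp] lemma sandwich_apply (A : M₂ →ₗ[R] M₃) (B : M₀ →ₗ[R] M₁) (g : M₁ →ₗ[R] M₂) :
    sandwich A B g = A.comp (g.comp B) := rfl

end Sandwich

section Weights

variable {n : ℕ}

lemma mdist_nonneg (μ ν : Fin n → ℤ) : 0 ≤ mdist μ ν :=
  Finset.sum_nonneg fun _ _ => abs_nonneg _

lemma mdist_eq_zero {μ ν : Fin n → ℤ} : mdist μ ν = 0 ↔ μ = ν := by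
  simp [mdist, Finset.sum_eq_zero_iff_of_nonneg, sub_eq_zero, funext_iff]

lemma mdist_comm (μ ν : Fin n → ℤ) : mdist μ ν = mdist ν μ := by
  simp only [mdist, abs_sub_comm]

lemma mdist_sub_single (ν : Fin n → ℤ) (i : Fin n) : mdist ν (ν - Pi.single i 1) = 1 := by
  simp [mdist, Pi.single_apply, apply_ite]

lemma mdist_add_single {lam ν : Fin n → ℤ} (h : lam ≤ ν) (i : Fin n) :
    mdist (ν + Pi.single i 1) lam = mdist ν lam + 1 := by
  have hi : (0 : Fin n → ℤ) ≤ Pi.single i 1 := Pi.single_nonneg.2 zero_le_one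
  have hterm : ∀ j, |(ν + Pi.single i 1 : Fin n → ℤ) j - lam j| =
      |ν j - lam j| + (Pi.single i 1 : Fin n → ℤ) j := fun j => by
    have hj : lam j ≤ ν j := h j
    have hij : 0 ≤ (Pi.single i 1 : Fin n → ℤ) j := hi j
    rw [Pi.add_apply, abs_of_nonneg (sub_nonneg.2 hj), abs_of_nonneg (by linarith)]
    ring
  simp only [mdist, hterm, Finset.sum_add_distrib, Finset.sum_pi_single', Finset.mem_univ, if_true]

/-- Take `j` to be the last index with `λ_j < μ_j`: beyond `j` the weight `μ` agrees with `λ`,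
so lowering `μ_j` by one keeps `μ` dominant. -/
lemma DomInt.exists_sub_single {lam μ : Fin n → ℤ} (hlam : DomInt lam) (hμ : DomInt μ)
    (hle : lam ≤ μ) (hne : lam ≠ μ) :
    ∃ j, DomInt (μ - Pi.single j 1) ∧ lam ≤ μ - Pi.single j 1 := by
  classical
  obtain ⟨i, hi⟩ := Function.ne_iff.1 hne
  obtain ⟨j, hj, hmax⟩ := (Finset.univ.filter fun i => lam i < μ i).exists_max_image id
    ⟨i, by simpa using lt_of_le_of_ne (hle i) hi⟩
  simp only [Finset.mem_filter, Finset.mem_univ, true_and, id] at hj hmax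
  have hgt : ∀ i, j < i → lam i = μ i := fun i hji =>
    (hle i).eq_of_not_lt fun h => (hmax i h).not_gt hji
  have hval : ∀ i, (μ - Pi.single j 1 : Fin n → ℤ) i = μ i - if i = j then 1 else 0 := fun i => by
    simp [Pi.single_apply]
  refine ⟨j, ⟨fun i i' hii' => ?_, fun i => ?_⟩, fun i => ?_⟩ <;> simp only [hval]
  · have := hμ.1 hii'
    split_ifs with h' <;> try omega
    subst j
    have := hgt i' (lt_of_le_of_ne hii' (Ne.symm h'))
    have := hlam.1 hii'
    omega
  · have := hμ.2 i
    have := hlam.2 j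
    split_ifs with h
    · subst h; omega
    · omega
  · have : lam i ≤ μ i := hle i
    split_ifs with h
    · subst h; omega
    · omega

lemma boxNext_le {μ : Fin n → ℤ} (hμ : DomInt μ) (i : Fin n) : boxNext μ i ≤ μ i := by
  unfold boxNext
  split
  · exact hμ.1 (by simp [Fin.le_def])
  · exact hμ.2 i

lemma inBox_self {μ : Fin n → ℤ} (hμ : DomInt μ) : InBox μ μ :=
  ⟨hμ, fun i => ⟨boxNext_le hμ i, le_rfl⟩⟩

lemma mem_boxFinset {μ lam : Fin n → ℤ} : lam ∈ boxFinset μ ↔ InBox μ lam := by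
  simp only [boxFinset, Finset.mem_filter, Finset.mem_Icc, and_iff_right_iff_imp]
  exact fun h => ⟨fun i => (h.2 i).1, fun i => (h.2 i).2⟩

lemma mdist_le_of_inBox (hn : 0 < n) {μ lam : Fin n → ℤ} (h : InBox μ lam) :
    mdist μ lam ≤ μ ⟨0, hn⟩ := by
  set g : ℕ → ℤ := fun k => if hk : k < n then μ ⟨k, hk⟩ else 0
  have htel : ∀ i : Fin n, μ i - boxNext μ i = g i - g (i + 1) := fun i => by
    simp only [g, boxNext, i.isLt, dif_pos]
  calc mdist μ lam = ∑ i, (μ i - lam i) :=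
        Finset.sum_congr rfl fun i _ => abs_of_nonneg (sub_nonneg.2 (h.2 i).2)
    _ ≤ ∑ i, (μ i - boxNext μ i) := Finset.sum_le_sum fun i _ => by linarith [(h.2 i).1]
    _ = ∑ k ∈ Finset.range n, (g k - g (k + 1)) := by
        rw [← Fin.sum_univ_eq_sum_range (fun k => g k - g (k + 1)) n]
        exact Finset.sum_congr rfl fun i _ => htel i
    _ = μ ⟨0, hn⟩ := by rw [Finset.sum_range_sub']; simp [g, hn]

end Weights

namespace WPath

variable {n : ℕ} {lam ν μ : Fin n → ℤ}

def refl (hn : 0 < n) (hν : DomInt ν) : WPath n ν ν where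
  N := 0
  seq _ := ν
  ch _ := ⟨0, hn⟩
  first := rfl
  last := rfl
  dom _ _ := hν
  step _ hp hp' := absurd (hp.trans hp') (by omega)

def snoc (Q : WPath n lam ν) (i : Fin n) (hμ : μ = ν + Pi.single i 1) (hdom : DomInt μ) :
    WPath n lam μ where
  N := Q.N + 1
  seq k := if k ≤ Q.N then Q.seq k else μ
  ch k := if k ≤ Q.N then Q.ch k else i
  first := by simp [Q.first]
  last := by simp
  dom k _ := by
    by_cases h : k ≤ Q.N
    · simpa [h] using Q.dom k h
    · simpa [h] using hdom
  step k h1 hk := by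
    by_cases h : k ≤ Q.N
    · simp only [h, if_true, show k - 1 ≤ Q.N by omega]
      exact Q.step k h1 h
    · obtain rfl : k = Q.N + 1 := by omega
      simp [Q.last, hμ]

@[simp] lemma snoc_N (Q : WPath n lam ν) (i : Fin n) (hμ : μ = ν + Pi.single i 1)
    (hdom : DomInt μ) : (Q.snoc i hμ hdom).N = Q.N + 1 := rfl

def dropLast (P : WPath n lam μ) {N : ℕ} (hN : P.N = N + 1) (h : P.seq N = ν) :
    WPath n lam ν where
  N := N
  seq := P.seq
  ch := P.ch
  first := P.first
  last := h
  dom k _ := P.dom k (by omega)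
  step k h1 _ := P.step k h1 (by omega)

lemma le_and_mdist_eq (P : WPath n lam μ) : lam ≤ μ ∧ mdist μ lam = P.N := by
  suffices H : ∀ k ≤ P.N, lam ≤ P.seq k ∧ mdist (P.seq k) lam = k by
    simpa [P.last] using H P.N le_rfl
  intro k
  induction k with
  | zero => intro _; simp [P.first, mdist_eq_zero]
  | succ k ih =>
    intro hk
    obtain ⟨hle, hd⟩ := ih (by omega)
    rw [P.step (k + 1) (by omega) hk, Nat.add_sub_cancel, mdist_add_single hle, hd]
    exact ⟨hle.trans (le_add_of_nonneg_right (Pi.single_nonneg.2 zero_le_one)), by push_cast; rfl⟩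

lemma nonempty (hn : 0 < n) (hlam : DomInt lam) (hμ : DomInt μ) (hle : lam ≤ μ) :
    Nonempty (WPath n lam μ) := by
  obtain ⟨k, hk⟩ : ∃ k : ℕ, mdist μ lam = k :=
    ⟨(mdist μ lam).toNat, (Int.toNat_of_nonneg (mdist_nonneg μ lam)).symm⟩
  induction k generalizing μ with
  | zero =>
    obtain rfl : μ = lam := mdist_eq_zero.1 hk
    exact ⟨refl hn hμ⟩
  | succ k ih =>
    obtain ⟨j, hν, hleν⟩ := hlam.exists_sub_single hμ hle
      (by rintro rfl; rw [mdist_eq_zero.2 rfl] at hk; omega)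
    have hμν : μ = μ - Pi.single j 1 + Pi.single j 1 := (sub_add_cancel _ _).symm
    have hk' : mdist (μ - Pi.single j 1) lam = k := by
      have := mdist_add_single hleν j
      rw [← hμν, hk] at this
      omega
    exact ⟨(ih hν hleν hk').some.snoc j hμν hμ⟩

end WPath

section PathOperatorLemmas

variable {n : ℕ} {V : (Fin n → ℤ) → Type*} [∀ lam, AddCommGroup (V lam)]
  [∀ lam, Module ℂ (V lam)] (T : ∀ μ lam : Fin n → ℤ, V lam →ₗ[ℂ] V μ) {lam ν μ : Fin n → ℤ}

lemma lcast_comp_eq_comp_lcast {a a' b b' : Fin n → ℤ} (ha : a = a') (hb : b = b') :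
    (lcast (V := V) ha).comp (T a b) = (T a' b').comp (lcast hb) := by
  subst ha hb; rfl

@[simp] lemma pathOp_refl (hn : 0 < n) (hν : DomInt ν) :
    pathOp T (WPath.refl hn hν) = LinearMap.id := rfl

@[simp] lemma revPathOp_refl (hn : 0 < n) (hν : DomInt ν) :
    revPathOp T (WPath.refl hn hν) = LinearMap.id := rfl

lemma pathOp_eq_comp_pathOp_dropLast (P : WPath n lam μ) {N : ℕ} (hN : P.N = N + 1)
    (h : P.seq N = ν) : pathOp T P = (T μ ν).comp (pathOp T (P.dropLast hN h)) := by
  cases P with | mk _ seq _ _ last => ?_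
  cases hN
  simp only [pathOp, pathOpAux, WPath.dropLast, ← LinearMap.comp_assoc,
    lcast_comp_eq_comp_lcast T last h]
  rfl

lemma revPathOp_eq_revPathOp_dropLast_comp (P : WPath n lam μ) {N : ℕ} (hN : P.N = N + 1)
    (h : P.seq N = ν) : revPathOp T P = (revPathOp T (P.dropLast hN h)).comp (T ν μ) := by
  cases P with | mk _ seq _ _ last => ?_
  cases hN
  simp only [revPathOp, revPathOpAux, WPath.dropLast, LinearMap.comp_assoc,
    ← lcast_comp_eq_comp_lcast T h.symm last.symm]
  rfl

def PathIndependent : Prop :=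
  ∀ ν μ : Fin n → ℤ, ∀ P₁ P₂ : WPath n ν μ,
    pathOp T P₁ = pathOp T P₂ ∧ revPathOp T P₁ = revPathOp T P₂

def VanishesOutsideBox : Prop :=
  ∀ lam μ : Fin n → ℤ, DomInt lam → DomInt μ →
    (∀ i, lam i ≤ μ i) → lam ≠ μ → ¬ InBox μ lam →
    ∀ P : WPath n lam μ, pathOp T P = 0 ∧ revPathOp T P = 0

variable {T}

/-- The initial segment of `Q.snoc …` is not `Q` itself (the sequences differ beyond `Q.N`), so
the two are identified through path independence. -/
lemma PathIndependent.pathOp_snoc (hT : PathIndependent T) (Q : WPath n lam ν) (i : Fin n)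
    (hμ : μ = ν + Pi.single i 1) (hdom : DomInt μ) :
    pathOp T (Q.snoc i hμ hdom) = (T μ ν).comp (pathOp T Q) := by
  rw [pathOp_eq_comp_pathOp_dropLast T _ (ν := ν) rfl (by simp [WPath.snoc, Q.last]),
    (hT _ _ _ Q).1]

lemma PathIndependent.revPathOp_snoc (hT : PathIndependent T) (Q : WPath n lam ν) (i : Fin n)
    (hμ : μ = ν + Pi.single i 1) (hdom : DomInt μ) :
    revPathOp T (Q.snoc i hμ hdom) = (revPathOp T Q).comp (T ν μ) := by
  rw [revPathOp_eq_revPathOp_dropLast_comp T _ (ν := ν) rfl (by simp [WPath.snoc, Q.last]),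
    (hT _ _ _ Q).2]

lemma VanishesOutsideBox.pathOp_eq_zero (hvanish : VanishesOutsideBox T) (P : WPath n lam μ)
    (h : ¬ InBox μ lam) : pathOp T P = 0 := by
  have hlam : DomInt lam := P.first ▸ P.dom 0 (Nat.zero_le _)
  have hμ : DomInt μ := P.last ▸ P.dom P.N le_rfl
  refine (hvanish lam μ hlam hμ P.le_and_mdist_eq.1 ?_ h P).1
  rintro rfl
  exact h (inBox_self hμ)

end PathOperatorLemmas

section LoopSpans

variable {n : ℕ} {V : (Fin n → ℤ) → Type*} [∀ lam, AddCommGroup (V lam)]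
  [∀ lam, Module ℂ (V lam)] (T : ∀ μ lam : Fin n → ℤ, V lam →ₗ[ℂ] V μ)
  (R Δ : ∀ lam : Fin n → ℤ, Module.End ℂ (V lam))

def loopSpan (ν : Fin n → ℤ) (m : ℕ) : Submodule ℂ (Module.End ℂ (V ν)) :=
  span ℂ {g | ∃ (lam : Fin n → ℤ) (Q : WPath n lam ν),
    Q.N = m ∧ g = (pathOp T Q).comp (revPathOp T Q)}

def laplaceLoopSpan (ν : Fin n → ℤ) (m : ℕ) : Submodule ℂ (Module.End ℂ (V ν)) :=
  span ℂ {g | ∃ (lam : Fin n → ℤ) (Q : WPath n lam ν),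
    g = (pathOp T Q).comp ((Δ lam ^ (m - Q.N - 1)).comp (revPathOp T Q))}

def factorSpan (ν : Fin n → ℤ) (m : ℕ) : Submodule ℂ (Module.End ℂ (V ν)) :=
  (laplaceLoopSpan T Δ ν m).map (sandwich (R ν) (R ν)) ⊔ loopSpan T ν m

lemma one_mem_loopSpan_zero (hn : 0 < n) {ν : Fin n → ℤ} (hν : DomInt ν) :
    1 ∈ loopSpan T ν 0 :=
  subset_span ⟨ν, WPath.refl hn hν, rfl, by simp [Module.End.one_eq_id]⟩

lemma pow_mem_laplaceLoopSpan_succ (hn : 0 < n) {ν : Fin n → ℤ} (hν : DomInt ν) (m : ℕ) :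
    Δ ν ^ m ∈ laplaceLoopSpan T Δ ν (m + 1) :=
  subset_span ⟨ν, WPath.refl hn hν, by rw [pathOp_refl, revPathOp_refl]; rfl⟩

variable {T R Δ}

lemma map_sandwich_loopSpan_le (hT : PathIndependent T) {ν μ : Fin n → ℤ} {i : Fin n}
    (hμ : μ = ν + Pi.single i 1) (hdom : DomInt μ) (m : ℕ) :
    (loopSpan T ν m).map (sandwich (T μ ν) (T ν μ)) ≤ loopSpan T μ (m + 1) := by
  rw [loopSpan, map_span_le]
  rintro _ ⟨lam, Q, rfl, rfl⟩
  refine subset_span ⟨lam, Q.snoc i hμ hdom, rfl, ?_⟩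
  simp only [sandwich_apply, hT.pathOp_snoc, hT.revPathOp_snoc, LinearMap.comp_assoc]

lemma map_sandwich_laplaceLoopSpan_le (hT : PathIndependent T) {ν μ : Fin n → ℤ} {i : Fin n}
    (hμ : μ = ν + Pi.single i 1) (hdom : DomInt μ) (m : ℕ) :
    (laplaceLoopSpan T Δ ν m).map (sandwich (T μ ν) (T ν μ)) ≤
      laplaceLoopSpan T Δ μ (m + 1) := by
  rw [laplaceLoopSpan, map_span_le]
  rintro _ ⟨lam, Q, rfl⟩
  refine subset_span ⟨lam, Q.snoc i hμ hdom, ?_⟩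
  simp only [sandwich_apply, hT.pathOp_snoc, hT.revPathOp_snoc, LinearMap.comp_assoc,
    WPath.snoc_N, Nat.add_sub_add_right]

lemma map_sandwich_factorSpan_le (hT : PathIndependent T) {ν μ : Fin n → ℤ} {i : Fin n}
    (hμ : μ = ν + Pi.single i 1) (hdom : DomInt μ)
    (hTR : (T μ ν).comp (R ν) = -(R μ).comp (T μ ν))
    (hRT : (R ν).comp (T ν μ) = -(T ν μ).comp (R μ)) (m : ℕ) :
    (factorSpan T R Δ ν m).map (sandwich (T μ ν) (T ν μ)) ≤ factorSpan T R Δ μ (m + 1) := by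
  have hcomm : (sandwich (T μ ν) (T ν μ)).comp (sandwich (R ν) (R ν)) =
      (sandwich (R μ) (R μ)).comp (sandwich (T μ ν) (T ν μ)) := by
    ext1 g
    calc (T μ ν).comp (((R ν).comp (g.comp (R ν))).comp (T ν μ))
        = ((T μ ν).comp (R ν)).comp (g.comp ((R ν).comp (T ν μ))) := rfl
      _ = (R μ).comp (((T μ ν).comp (g.comp (T ν μ))).comp (R μ)) := by
        rw [hTR, hRT]
        simp only [LinearMap.neg_comp, LinearMap.comp_neg, neg_neg]
        rfl
  rw [factorSpan, factorSpan, Submodule.map_sup, ← map_comp, hcomm, map_comp]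
  exact sup_le_sup (map_mono (map_sandwich_laplaceLoopSpan_le hT hμ hdom m))
    (map_sandwich_loopSpan_le hT hμ hdom m)

end LoopSpans

section Factorization

variable {n : ℕ} {V : (Fin n → ℤ) → Type*} [∀ lam, AddCommGroup (V lam)]
  [∀ lam, Module ℂ (V lam)] {T : ∀ μ lam : Fin n → ℤ, V lam →ₗ[ℂ] V μ}
  {R Δ : ∀ lam : Fin n → ℤ, Module.End ℂ (V lam)}

lemma laplace_pow_succ {ν : Fin n → ℤ} {a : ℂ} {b : Fin n → ℂ}
    (hfact : Δ ν = a • ((R ν).comp (R ν)) +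
      ∑ p : Fin n, b p • (T ν (ν - Pi.single p 1)).comp (T (ν - Pi.single p 1) ν))
    (hΔR : (Δ ν).comp (R ν) = (R ν).comp (Δ ν))
    (hΔT : ∀ p : Fin n, (Δ ν).comp (T ν (ν - Pi.single p 1)) =
      (T ν (ν - Pi.single p 1)).comp (Δ (ν - Pi.single p 1))) (m : ℕ) :
    Δ ν ^ (m + 1) = a • sandwich (R ν) (R ν) (Δ ν ^ m) +
      ∑ p : Fin n, b p • sandwich (T ν (ν - Pi.single p 1)) (T (ν - Pi.single p 1) ν)
        (Δ (ν - Pi.single p 1) ^ m) := by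
  have hT_pow : ∀ p : Fin n, (Δ ν ^ m).comp (T ν (ν - Pi.single p 1)) =
      (T ν (ν - Pi.single p 1)).comp (Δ (ν - Pi.single p 1) ^ m) := fun p =>
    Module.End.commute_pow_left_of_commute (hΔT p) m
  conv_lhs => rw [pow_succ]; arg 2; rw [hfact]
  simp only [mul_add, Finset.mul_sum, mul_smul_comm, Module.End.mul_eq_comp, sandwich_apply,
    ← LinearMap.comp_assoc, hT_pow]
  rw [Module.End.commute_pow_left_of_commute hΔR m]

theorem pow_mem_factorSpan (hn : 0 < n)
    (hT0 : ∀ μ lam : Fin n → ℤ, ¬(DomInt μ ∧ DomInt lam) → T μ lam = 0)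
    (a : (Fin n → ℤ) → ℂ) (b : (Fin n → ℤ) → Fin n → ℂ)
    (hfact : ∀ lam : Fin n → ℤ, DomInt lam →
      Δ lam = a lam • ((R lam).comp (R lam)) +
        ∑ p : Fin n, b lam p •
          (T lam (lam - Pi.single p 1)).comp (T (lam - Pi.single p 1) lam))
    (hanti : ∀ μ lam : Fin n → ℤ, mdist μ lam = 1 →
      (T μ lam).comp (R lam) + (R μ).comp (T μ lam) = 0)
    (hΔT : ∀ μ lam : Fin n → ℤ, mdist μ lam = 1 →
      (Δ μ).comp (T μ lam) = (T μ lam).comp (Δ lam))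
    (hΔR : ∀ lam : Fin n → ℤ, (Δ lam).comp (R lam) = (R lam).comp (Δ lam))
    (hT : PathIndependent T) (m : ℕ) :
    ∀ ν : Fin n → ℤ, DomInt ν → Δ ν ^ m ∈ factorSpan T R Δ ν m := by
  induction m with
  | zero =>
    intro ν hν
    rw [pow_zero]
    exact mem_sup_right (one_mem_loopSpan_zero T hn hν)
  | succ m ih =>
    intro ν hν
    rw [laplace_pow_succ (hfact ν hν) (hΔR ν) fun p => hΔT _ _ (mdist_sub_single ν p)]
    refine add_mem (smul_mem _ _ (mem_sup_left (mem_map_of_mem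
      (pow_mem_laplaceLoopSpan_succ T Δ hn hν m)))) (sum_mem fun p _ => smul_mem _ _ ?_)
    by_cases hp : DomInt (ν - Pi.single p 1)
    · have hd : mdist ν (ν - Pi.single p 1) = 1 := mdist_sub_single ν p
      have hd' : mdist (ν - Pi.single p 1) ν = 1 := by rw [mdist_comm, hd]
      exact map_sandwich_factorSpan_le hT (sub_add_cancel ν _).symm hν
        (eq_neg_of_add_eq_zero_left (hanti _ _ hd)) (eq_neg_of_add_eq_zero_right (hanti _ _ hd'))
        m (mem_map_of_mem (ih _ hp))
    · simp [hT0 ν _ fun h => hp h.2]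

lemma loopSpan_eq_bot (hvanish : VanishesOutsideBox T) (hn : 0 < n) {μ : Fin n → ℤ} {m : ℕ}
    (hm : μ ⟨0, hn⟩ < m) : loopSpan T μ m = ⊥ := by
  rw [loopSpan, span_eq_bot]
  rintro _ ⟨lam, Q, hQ, rfl⟩
  have hout : ¬ InBox μ lam := fun h => by
    have := mdist_le_of_inBox hn h
    rw [Q.le_and_mdist_eq.2, hQ] at this
    omega
  rw [hvanish.pathOp_eq_zero Q hout, LinearMap.zero_comp]

lemma laplaceLoopSpan_le_span_box (hvanish : VanishesOutsideBox T) (hT : PathIndependent T)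
    {μ : Fin n → ℤ} (P : ∀ lam ∈ boxFinset μ, WPath n lam μ) (m : ℕ) :
    laplaceLoopSpan T Δ μ m ≤ span ℂ (Set.range fun x : boxFinset μ =>
      (pathOp T (P x.1 x.2)).comp
        ((Δ x.1 ^ (m - (mdist μ x.1).toNat - 1)).comp (revPathOp T (P x.1 x.2)))) := by
  rw [laplaceLoopSpan, span_le]
  rintro _ ⟨lam, Q, rfl⟩
  by_cases hlam : lam ∈ boxFinset μ
  · refine subset_span ⟨⟨lam, hlam⟩, ?_⟩
    obtain ⟨h1, h2⟩ := hT _ _ Q (P lam hlam)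
    simp only [Q.le_and_mdist_eq.2, Int.toNat_natCast, h1, h2]
  · rw [SetLike.mem_coe, hvanish.pathOp_eq_zero Q (mt mem_boxFinset.2 hlam),
      LinearMap.zero_comp]
    exact zero_mem _

end Factorization

theorem laplace_power_factorization_general {n : ℕ} (hn : 0 < n)
    {V : (Fin n → ℤ) → Type*} [∀ lam, AddCommGroup (V lam)]
    [∀ lam, Module ℂ (V lam)]
    (T : ∀ μ lam : Fin n → ℤ, V lam →ₗ[ℂ] V μ)
    (R : ∀ lam : Fin n → ℤ, Module.End ℂ (V lam))
    (Δ : ∀ lam : Fin n → ℤ, Module.End ℂ (V lam))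
    (hT0 : ∀ μ lam : Fin n → ℤ, ¬(DomInt μ ∧ DomInt lam) → T μ lam = 0)
    -- (a) splitting of the Laplace operator
    (a : (Fin n → ℤ) → ℂ) (b : (Fin n → ℤ) → Fin n → ℂ)
    (hfact : ∀ lam : Fin n → ℤ, DomInt lam →
      Δ lam = a lam • ((R lam).comp (R lam)) +
        ∑ p : Fin n, b lam p •
          (T lam (lam - Pi.single p 1)).comp (T (lam - Pi.single p 1) lam))
    -- (b) anticommutation of T and R
    (hanti : ∀ μ lam : Fin n → ℤ, mdist μ lam = 1 →
      (T μ lam).comp (R lam) + (R μ).comp (T μ lam) = 0)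
    -- (c) the Laplace operators commute with T and R
    (hΔT : ∀ μ lam : Fin n → ℤ, mdist μ lam = 1 →
      (Δ μ).comp (T μ lam) = (T μ lam).comp (Δ lam))
    (hΔR : ∀ lam : Fin n → ℤ, (Δ lam).comp (R lam) = (R lam).comp (Δ lam))
    -- (d) path operators to and from weights outside the box vanish
    (hvanish : ∀ lam μ : Fin n → ℤ, DomInt lam → DomInt μ →
      (∀ i, lam i ≤ μ i) → lam ≠ μ → ¬ InBox μ lam →
      ∀ P : WPath n lam μ, pathOp T P = 0 ∧ revPathOp T P = 0)
    -- (e) path operators do not depend on the chosen path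
    (hindep : ∀ ν μ : Fin n → ℤ, ∀ P₁ P₂ : WPath n ν μ,
      pathOp T P₁ = pathOp T P₂ ∧ revPathOp T P₁ = revPathOp T P₂)
    (μ : Fin n → ℤ) (hμ : DomInt μ) (n₀ : ℕ) (hn₀ : μ ⟨0, hn⟩ < (n₀ : ℤ)) :
    ∃ (c : (Fin n → ℤ) → ℂ)
      (P : (lam : Fin n → ℤ) → lam ∈ boxFinset μ → WPath n lam μ),
      Δ μ ^ n₀ =
        (R μ).comp
          ((∑ x ∈ (boxFinset μ).attach,
            c x.1 • ((pathOp T (P x.1 x.2)).comp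
              (((Δ x.1) ^ (n₀ - (mdist μ x.1).toNat - 1)).comp
                (revPathOp T (P x.1 x.2))))).comp (R μ)) := by
  have hP : ∀ lam ∈ boxFinset μ, Nonempty (WPath n lam μ) := fun lam h =>
    WPath.nonempty hn (mem_boxFinset.1 h).1 hμ fun i => ((mem_boxFinset.1 h).2 i).2
  let P : ∀ lam ∈ boxFinset μ, WPath n lam μ := fun lam h => (hP lam h).some
  have hmem := pow_mem_factorSpan hn hT0 a b hfact hanti hΔT hΔR hindep n₀ μ hμ
  rw [factorSpan, loopSpan_eq_bot hvanish hn hn₀, sup_bot_eq] at hmem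
  obtain ⟨w, hw, hRwR⟩ := mem_map.1 hmem
  obtain ⟨c, rfl⟩ :=
    (mem_span_range_iff_exists_fun ℂ).1 (laplaceLoopSpan_le_span_box hvanish hindep P n₀ hw)
  refine ⟨fun lam => if h : lam ∈ boxFinset μ then c ⟨lam, h⟩ else 0, P, ?_⟩
  rw [← hRwR, sandwich_apply, Finset.univ_eq_attach]
  simp only [Finset.coe_mem, dif_pos]

/-- Factorization of powers of the Laplace operator (abstract form): under the
hypotheses (a)–(e), for every dominant integral `μ` and every `n₀ > μ_1` there
are constants `c(μ,λ)` and path operators `P_{μλ}`, `P_{λμ}` (along some paths)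
such that `Δ_μ^{n₀} = R_μ ∘ [∑_{λ ∈ B(μ)} c(μ,λ) P_{μλ} Δ_λ^{n₀-|μ,λ|-1} P_{λμ}] ∘ R_μ`. -/
theorem laplace_power_factorization {n : ℕ} (hn : 0 < n)
    {V : (Fin n → ℤ) → Type*} [∀ lam, AddCommGroup (V lam)]
    [∀ lam, Module ℂ (V lam)]
    (T : ∀ μ lam : Fin n → ℤ, V lam →ₗ[ℂ] V μ)
    (R : ∀ lam : Fin n → ℤ, Module.End ℂ (V lam))
    (Δ : ∀ lam : Fin n → ℤ, Module.End ℂ (V lam))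
    (hT0 : ∀ μ lam : Fin n → ℤ, ¬(DomInt μ ∧ DomInt lam) → T μ lam = 0)
    (hR0 : ∀ lam : Fin n → ℤ, ¬ DomInt lam → R lam = 0)
    -- (a) splitting of the Laplace operator
    (a : (Fin n → ℤ) → ℂ) (b : (Fin n → ℤ) → Fin n → ℂ)
    (ha : ∀ lam : Fin n → ℤ, DomInt lam → a lam ≠ 0)
    (hfact : ∀ lam : Fin n → ℤ, DomInt lam →
      Δ lam = a lam • ((R lam).comp (R lam)) +
        ∑ p : Fin n, b lam p •
          (T lam (lam - Pi.single p 1)).comp (T (lam - Pi.single p 1) lam))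
    -- (b) anticommutation of T and R
    (hanti : ∀ μ lam : Fin n → ℤ, mdist μ lam = 1 →
      (T μ lam).comp (R lam) + (R μ).comp (T μ lam) = 0)
    -- (c) the Laplace operators commute with T and R
    (hΔT : ∀ μ lam : Fin n → ℤ, mdist μ lam = 1 →
      (Δ μ).comp (T μ lam) = (T μ lam).comp (Δ lam))
    (hΔR : ∀ lam : Fin n → ℤ, (Δ lam).comp (R lam) = (R lam).comp (Δ lam))
    -- (d) path operators to and from weights outside the box vanish
    (hvanish : ∀ lam μ : Fin n → ℤ, DomInt lam → DomInt μ →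
      (∀ i, lam i ≤ μ i) → lam ≠ μ → ¬ InBox μ lam →
      ∀ P : WPath n lam μ, pathOp T P = 0 ∧ revPathOp T P = 0)
    -- (e) path operators do not depend on the chosen path
    (hindep : ∀ ν μ : Fin n → ℤ, ∀ P₁ P₂ : WPath n ν μ,
      pathOp T P₁ = pathOp T P₂ ∧ revPathOp T P₁ = revPathOp T P₂)
    (μ : Fin n → ℤ) (hμ : DomInt μ) (n₀ : ℕ) (hn₀ : μ ⟨0, hn⟩ < (n₀ : ℤ)) :
    ∃ (c : (Fin n → ℤ) → ℂ)
      (P : (lam : Fin n → ℤ) → lam ∈ boxFinset μ → WPath n lam μ),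
      Δ μ ^ n₀ =
        (R μ).comp
          ((∑ x ∈ (boxFinset μ).attach,
            c x.1 • ((pathOp T (P x.1 x.2)).comp
              (((Δ x.1) ^ (n₀ - (mdist μ x.1).toNat - 1)).comp
                (revPathOp T (P x.1 x.2))))).comp (R μ)) :=
  laplace_power_factorization_general hn T R Δ hT0 a b hfact hanti hΔT hΔR hvanish hindep μ hμ n₀
    hn₀
end
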